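/- arXiv:1805.00910 — 6 statements merged into one kernel-verified Lean document; each statement's English description precedes it below -/
import Mathlib

section
/- Let G be a group and N a normal subgroup of G such that the quotient G/N has finite subgroup-chain length l(G/N). If N satisfies the minimal condition on centralizers, then G satisfies the minimal condition on centralizers. -/
/-- A group is locally finite if every finitely generated subgroup is finite. -/
def LocallyFiniteGroup (G : Type*) [Group G] : Prop :=
  ∀ S : Finset G, Set.Finite (Subgroup.closure (S : Set G) : Set G)

/-- A group is locally soluble if every finitely generated subgroup is soluble. -/
def LocallySolvable (G : Type*) [Group G] : Prop :=
  ∀ S : Finset G, IsSolvable (Subgroup.closure (S : Set G))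

/-- A group is locally nilpotent if every finitely generated subgroup is nilpotent. -/
def LocallyNilpotent (G : Type*) [Group G] : Prop :=
  ∀ S : Finset G, Group.IsNilpotent (Subgroup.closure (S : Set G))

/-- A strictly increasing chain of centralizers of subsets, of length `n`
(i.e. with `n + 1` members). -/
def IsCentralizerChain {G : Type*} [Group G] {n : ℕ} (c : Fin (n + 1) → Subgroup G) : Prop :=
  StrictMono c ∧ ∀ i, ∃ S : Set G, c i = Subgroup.centralizer S

/-- The c-dimension of a group: the supremum of lengths of strict chains of
nested centralizers of subsets. -/
noncomputable def cdim (G : Type*) [Group G] : ℕ∞ :=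
  ⨆ (n : ℕ) (_ : ∃ c : Fin (n + 1) → Subgroup G, IsCentralizerChain c), (n : ℕ∞)

/-- `l(G)`: the supremum of lengths of strict chains of nested subgroups. -/
noncomputable def subgroupChainLength (G : Type*) [Group G] : ℕ∞ :=
  ⨆ (n : ℕ) (_ : ∃ c : Fin (n + 1) → Subgroup G, StrictMono c), (n : ℕ∞)

/-- The minimal condition on centralizers: there is no infinite strictly
descending chain of centralizers of subsets. -/
def MinimalConditionOnCentralizers (G : Type*) [Group G] : Prop :=
  ¬ ∃ c : ℕ → Subgroup G, StrictAnti c ∧ ∀ i, ∃ S : Set G, c i = Subgroup.centralizer S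

/-- A minimal normal subgroup. -/
def IsMinimalNormal {G : Type*} [Group G] (N : Subgroup G) : Prop :=
  N.Normal ∧ N ≠ ⊥ ∧ ∀ M : Subgroup G, M.Normal → M ≤ N → M = ⊥ ∨ M = N

theorem Subgroup.normal_iSup_of_normal {G : Type*} [Group G] {ι : Sort*} (S : ι → Subgroup G)
    (h : ∀ i, (S i).Normal) : (⨆ i, S i).Normal := by
  constructor
  intro x hx g
  refine Subgroup.iSup_induction S (C := fun y => g * y * g⁻¹ ∈ ⨆ i, S i) hx
    (fun i y hy => ?_) ?_ (fun y z hy hz => ?_)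
  · exact Subgroup.mem_iSup_of_mem i ((h i).conj_mem y hy g)
  · simpa using (⨆ i, S i).one_mem
  · have hm := mul_mem hy hz
    have heq : g * (y * z) * g⁻¹ = g * y * g⁻¹ * (g * z * g⁻¹) := by group
    show g * (y * z) * g⁻¹ ∈ ⨆ i, S i
    rw [heq]; exact hm

/-- The socle: the subgroup generated by all minimal normal subgroups. -/
def socle (G : Type*) [Group G] : Subgroup G :=
  ⨆ N : { N : Subgroup G // IsMinimalNormal N }, (N : Subgroup G)

instance socle_normal (G : Type*) [Group G] : (socle G).Normal :=
  Subgroup.normal_iSup_of_normal _ (fun N => N.2.1)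

/-- A group is linear if it embeds in some `GL n F` for a field `F`. -/
def IsLinearGroup (G : Type*) [Group G] : Prop :=
  ∃ (n : ℕ) (F : Type) (_ : Field F) (φ : G →* GL (Fin n) F), Function.Injective φ

/-- A subgroup is subnormal if there is a finite chain of successive normal
subgroups connecting it to the whole group. -/
def IsSubnormal {G : Type*} [Group G] (H : Subgroup G) : Prop :=
  ∃ (n : ℕ) (c : Fin (n + 1) → Subgroup G), c 0 = H ∧ c (Fin.last n) = ⊤ ∧
    ∀ i : Fin n, c i.castSucc ≤ c i.succ ∧ ((c i.castSucc).subgroupOf (c i.succ)).Normal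

/-- A group is quasisimple if it is perfect and its central quotient is simple. -/
def IsQuasisimple (Q : Type*) [Group Q] : Prop :=
  commutator Q = ⊤ ∧ IsSimpleGroup (Q ⧸ Subgroup.center Q)

/-- A component of a group: a subnormal quasisimple subgroup. -/
def IsComponent {G : Type*} [Group G] (Q : Subgroup G) : Prop :=
  IsSubnormal Q ∧ IsQuasisimple Q

/-- The layer `E(G)`: the subgroup generated by all components. -/
def layer (G : Type*) [Group G] : Subgroup G :=
  ⨆ Q : { Q : Subgroup G // IsComponent Q }, (Q : Subgroup G)

/-- `N` is the Hirsch–Plotkin radical of `G`: the largest normal locally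
nilpotent subgroup. -/
def IsHirschPlotkinRadical (G : Type*) [Group G] (N : Subgroup G) : Prop :=
  N.Normal ∧ LocallyNilpotent N ∧ ∀ M : Subgroup G, M.Normal → LocallyNilpotent M → M ≤ N


instance centralizer_subgroupOf_normalizer_normal {G : Type*} [Group G] (H : Subgroup G) :
    ((Subgroup.centralizer (H : Set G)).subgroupOf (Subgroup.normalizer (H : Set G))).Normal := by
  rw [← Subgroup.normalizerMonoidHom_ker]
  exact MonoidHom.normal_ker _

/-- For a group `E` acting on a group `Q` and `F ≤ E`, the set of points of `Q`
fixed by every element of `F`. -/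
def fixedSet {E Q : Type*} [Monoid E] [Monoid Q] [MulDistribMulAction E Q]
    (F : Submonoid E) : Set Q :=
  {q | ∀ f ∈ F, f • q = q}

/-- A group is an (internal) direct product of finitely many simple groups. -/
def IsDirectProductOfFinitelyManySimpleGroups (H : Type*) [Group H] : Prop :=
  ∃ (n : ℕ) (N : Fin n → Subgroup H), (∀ i, (N i).Normal) ∧ iSupIndep N ∧
    (⨆ i, N i) = ⊤ ∧ ∀ i, IsSimpleGroup (N i)


/-!
Let `c i = C(S i)` be a descending chain of centralizers. The subgroups `H i = C(c i)` ascend and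
`C(H i) = c i`. Their images in `G ⧸ N` stabilise, say from `i₀` on, and then the Dedekind law
(valid since `N` is normal) gives `H i = H i₀ ⊔ (N ⊓ H i)`, hence `c i = C(H i₀) ⊓ C(N ⊓ H i)`.
Inside `N` the second factor is the centralizer of a subset of `N`, so `c i ⊓ N` stabilises by
the minimal condition on `N`. The images of the `c i` in `G ⧸ N` stabilise too, and a chain of
subgroups whose intersections with `N` and images modulo `N` are both constant is constant.
-/

section ChainLength

variable {Q : Type*} [Group Q]

lemma le_subgroupChainLength {n : ℕ} (c : Fin (n + 1) → Subgroup Q) (hc : StrictMono c) :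
    (n : ℕ∞) ≤ subgroupChainLength Q :=
  le_iSup₂_of_le (f := fun n (_ : ∃ c : Fin (n + 1) → Subgroup Q, StrictMono c) => (n : ℕ∞))
    n ⟨c, hc⟩ le_rfl

lemma subgroupChainLength_eq_top_of_strictMono {f : ℕ → Subgroup Q} (hf : StrictMono f) :
    subgroupChainLength Q = ⊤ :=
  ENat.eq_top_iff_forall_ge.2 fun n =>
    le_subgroupChainLength (fun k : Fin (n + 1) => f k) (hf.comp Fin.val_strictMono)

lemma subgroupChainLength_eq_top_of_strictAnti {f : ℕ → Subgroup Q} (hf : StrictAnti f) :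
    subgroupChainLength Q = ⊤ :=
  ENat.eq_top_iff_forall_ge.2 fun n =>
    le_subgroupChainLength (fun k : Fin (n + 1) => f k.rev)
      ((hf.comp_strictMono Fin.val_strictMono).comp Fin.rev_strictAnti)

lemma wellFoundedGT_subgroup_of_subgroupChainLength_ne_top (h : subgroupChainLength Q ≠ ⊤) :
    WellFoundedGT (Subgroup Q) :=
  ⟨RelEmbedding.wellFounded_iff_isEmpty.2
    ⟨fun f => h (subgroupChainLength_eq_top_of_strictMono fun _ _ hab => f.map_rel_iff.2 hab)⟩⟩

lemma wellFoundedLT_subgroup_of_subgroupChainLength_ne_top (h : subgroupChainLength Q ≠ ⊤) :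
    WellFoundedLT (Subgroup Q) :=
  ⟨RelEmbedding.wellFounded_iff_isEmpty.2
    ⟨fun f => h (subgroupChainLength_eq_top_of_strictAnti fun _ _ hab => f.map_rel_iff.2 hab)⟩⟩

end ChainLength

namespace Subgroup

variable {G : Type*} [Group G]

lemma centralizer_centralizer_centralizer (S : Set G) :
    centralizer (centralizer (centralizer S : Set G) : Set G) = centralizer S :=
  SetLike.coe_injective (Set.centralizer_centralizer_centralizer S)

lemma centralizer_sup (H K : Subgroup G) :
    centralizer ((H ⊔ K : Subgroup G) : Set G) = centralizer H ⊓ centralizer K := by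
  rw [sup_eq_closure, centralizer_closure]
  exact SetLike.coe_injective Set.centralizer_union

lemma centralizer_inf_subgroupOf (N K : Subgroup G) :
    (centralizer ((N ⊓ K : Subgroup G) : Set G)).subgroupOf N =
      centralizer (K.subgroupOf N : Set N) := by
  ext x
  simp only [mem_subgroupOf, mem_centralizer_iff, SetLike.mem_coe, mem_inf]
  constructor
  · intro h y hy
    exact Subtype.ext (h y ⟨y.2, hy⟩)
  · intro h y ⟨hyN, hyK⟩
    exact congrArg Subtype.val (h ⟨y, hyN⟩ hyK)

lemma inf_subgroupOf (A B N : Subgroup G) :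
    (A ⊓ B).subgroupOf N = A.subgroupOf N ⊓ B.subgroupOf N :=
  comap_inf A B N.subtype

variable {N : Subgroup G} [N.Normal]

open scoped Pointwise in
lemma sup_normal_inf_assoc_of_le {K H : Subgroup G} (hKH : K ≤ H) :
    (K ⊔ N) ⊓ H = K ⊔ N ⊓ H := by
  refine le_antisymm (fun x hx => ?_)
    (sup_le (le_inf le_sup_left hKH) (inf_le_inf_right _ le_sup_right))
  have hx' : x ∈ (K : Set G) * ((N ⊓ H : Subgroup G) : Set G) := by
    rw [mul_inf_assoc K N H hKH, ← mul_normal]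
    exact hx
  obtain ⟨k, hk, n, hn, rfl⟩ := hx'
  exact mul_mem (mem_sup_left hk) (mem_sup_right hn)

lemma eq_sup_inf_of_le_of_sup_eq {K H : Subgroup G} (hKH : K ≤ H) (hsup : H ⊔ N = K ⊔ N) :
    H = K ⊔ N ⊓ H := by
  rw [← sup_normal_inf_assoc_of_le hKH, ← hsup, inf_eq_right.2 le_sup_left]

lemma eq_of_le_of_sup_eq_of_inf_eq {K H : Subgroup G} (hKH : K ≤ H) (hsup : H ⊔ N = K ⊔ N)
    (hinf : H ⊓ N = K ⊓ N) : K = H := by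
  rw [eq_sup_inf_of_le_of_sup_eq hKH hsup, inf_comm, hinf, sup_inf_self]

lemma map_mk'_eq_map_mk'_iff {K H : Subgroup G} :
    K.map (QuotientGroup.mk' N) = H.map (QuotientGroup.mk' N) ↔ K ⊔ N = H ⊔ N := by
  rw [map_eq_map_iff, QuotientGroup.ker_mk']

end Subgroup

namespace MinimalConditionOnCentralizers

open Subgroup

variable {G : Type*} [Group G]

lemma antitone_chain_condition (h : MinimalConditionOnCentralizers G) {c : ℕ → Subgroup G}
    (hc : Antitone c) (hcen : ∀ i, ∃ S : Set G, c i = centralizer S) :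
    ∃ n, ∀ m, n ≤ m → c n = c m := by
  have : WellFoundedLT {H : Subgroup G // ∃ S : Set G, H = centralizer S} :=
    ⟨RelEmbedding.wellFounded_iff_isEmpty.2
      ⟨fun f => h ⟨fun n => f n, fun _ _ hab => f.map_rel_iff.2 hab, fun n => (f n).2⟩⟩⟩
  obtain ⟨n, hn⟩ := WellFoundedLT.antitone_chain_condition
    (f := fun i => (⟨c i, hcen i⟩ : {H : Subgroup G // ∃ S : Set G, H = centralizer S}))
    fun _ _ hij => hc hij
  exact ⟨n, fun m hm => congrArg Subtype.val (hn m hm)⟩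

theorem of_quotient (N : Subgroup G) [N.Normal]
    [WellFoundedLT (Subgroup (G ⧸ N))] [WellFoundedGT (Subgroup (G ⧸ N))]
    (hN : MinimalConditionOnCentralizers N) : MinimalConditionOnCentralizers G := by
  rintro ⟨c, hc, hcen⟩
  let H (i : ℕ) : Subgroup G := centralizer (c i)
  have hH : Monotone H := fun i j hij => centralizer_le (hc.antitone hij)
  have hcH (i : ℕ) : centralizer (H i) = c i := by
    obtain ⟨S, hS⟩ := hcen i
    simp only [H, hS, centralizer_centralizer_centralizer]
  obtain ⟨i₀, hi₀⟩ := WellFoundedGT.monotone_chain_condition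
    ⟨fun i => (H i).map (QuotientGroup.mk' N), fun i j hij => map_mono (hH hij)⟩
  have hsplit (i : ℕ) (hi : i₀ ≤ i) :
      c i = centralizer (H i₀) ⊓ centralizer ((N ⊓ H i : Subgroup G) : Set G) := by
    rw [← hcH i, ← centralizer_sup,
      ← eq_sup_inf_of_le_of_sup_eq (hH hi) (map_mk'_eq_map_mk'_iff.1 (hi₀ i hi).symm)]
  obtain ⟨i₁, hi₁⟩ := hN.antitone_chain_condition
    (c := fun i => centralizer ((H i).subgroupOf N : Set N))
    (fun i j hij => centralizer_le (subgroupOf_mono N (hH hij))) fun i => ⟨_, rfl⟩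
  have hsubgroupOf (i : ℕ) (hi₀i : i₀ ≤ i) (hi₁i : i₁ ≤ i) :
      (c i).subgroupOf N = (centralizer (H i₀)).subgroupOf N ⊓
        centralizer ((H i₁).subgroupOf N : Set N) := by
    rw [hsplit i hi₀i, inf_subgroupOf, centralizer_inf_subgroupOf, hi₁ i hi₁i]
  obtain ⟨i₂, hi₂⟩ := WellFoundedLT.antitone_chain_condition
    (f := fun i => (c i).map (QuotientGroup.mk' N)) fun i j hij => map_mono (hc.antitone hij)
  set i := max i₀ (max i₁ i₂)
  have hinf : c i ⊓ N = c (i + 1) ⊓ N := subgroupOf_inj.1 <| by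
    rw [hsubgroupOf i (by omega) (by omega), hsubgroupOf (i + 1) (by omega) (by omega)]
  have hsup : c i ⊔ N = c (i + 1) ⊔ N :=
    map_mk'_eq_map_mk'_iff.1 ((hi₂ i (by omega)).symm.trans (hi₂ (i + 1) (by omega)))
  exact (hc i.lt_succ_self).ne (eq_of_le_of_sup_eq_of_inf_eq (hc.antitone i.le_succ) hsup hinf)

end MinimalConditionOnCentralizers

theorem minimalConditionOnCentralizers_of_quotient_finite_length
    (G : Type*) [Group G] (N : Subgroup G) [N.Normal] (l : ℕ)
    (hl : subgroupChainLength (G ⧸ N) = (l : ℕ∞))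
    (hN : MinimalConditionOnCentralizers N) :
    MinimalConditionOnCentralizers G := by
  have hfin : subgroupChainLength (G ⧸ N) ≠ ⊤ := hl ▸ ENat.natCast_ne_top l
  have := wellFoundedLT_subgroup_of_subgroupChainLength_ne_top hfin
  have := wellFoundedGT_subgroup_of_subgroupChainLength_ne_top hfin
  exact hN.of_quotient
end

section
/- Let G be a group and N a normal subgroup of G such that the quotient G/N has finite subgroup-chain length l(G/N) = l. If N has finite c-dimension k, then G has finite c-dimension at most (l+1)²(k+1). -/
/-! A strict chain of centralizers `H₀ < ⋯ < Hₙ` in `G` is controlled by its images `HᵢN/N`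
and `Hᵢ ∩ N`: by the Dedekind law, if `H < K` and `HN = KN` then `H ∩ N < K ∩ N`. A poset whose
fibres over `Subgroup (G ⧸ N)` all have dimension `≤ m` has dimension `≤ (m + 1) l + m`.

The groups `C_G(S) ∩ N` are not centralizers in `N`, but `D ↦ C_G(D)` reverses their order
injectively, since `C_G(S) ∩ N = C_G(C_G(C_G(S) ∩ N)) ∩ N`. Its values `C_G(T)` with `T ⊆ N` fibre
over `G ⧸ N` once more, now with `C_G(T) ∩ N = C_N(T)` a centralizer of `N`. Two fibre counts give
`cdim G ≤ (l + 1)² (k + 1) - 1`. -/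

open Order Subgroup

section ChainLength

variable {α : Type*} [Preorder α]

theorem iSup_length_strictMono_eq_krullDim [Nonempty α] :
    ((⨆ (n : ℕ) (_ : ∃ c : Fin (n + 1) → α, StrictMono c), (n : ℕ∞) : ℕ∞) : WithBot ℕ∞) =
      krullDim α := by
  rw [krullDim_eq_iSup_length]
  congr 1
  exact le_antisymm (iSup₂_le fun n ⟨c, hc⟩ => le_iSup_of_le (LTSeries.mk n c hc) le_rfl)
    (iSup_le fun p => le_iSup₂_of_le p.length ⟨p, p.strictMono⟩ le_rfl)

theorem krullDim_le_of_strictMono_on_fibers {β γ : Type*} [PartialOrder β] [Preorder γ]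
    {f : α → β} (hf : Monotone f) {g : α → γ} (hg : ∀ ⦃a b⦄, f a = f b → a < b → g a < g b)
    {l m : ℕ} (hβ : krullDim β ≤ l) (hγ : krullDim γ ≤ m) :
    krullDim α ≤ ((m + 1) * l + m : ℕ) := by
  have hfiber : ∀ x, krullDim (f ⁻¹' {x}) ≤ m := fun x =>
    (krullDim_le_of_strictMono (fun a : f ⁻¹' {x} => g a)
      fun a b hab => hg (a.2.trans b.2.symm) hab).trans hγ
  calc krullDim α ≤ (m + 1) * krullDim β + m := krullDim_le_of_krullDim_preimage_le' f hf hfiber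
    _ ≤ (m + 1) * l + m := by gcongr
    _ = ((m + 1) * l + m : ℕ) := by push_cast; rfl

end ChainLength

namespace Subgroup

variable {G : Type*} [Group G]

theorem inf_lt_inf_of_lt_of_sup_eq {N H K : Subgroup G} [N.Normal] (hHK : H < K)
    (hsup : H ⊔ N = K ⊔ N) : H ⊓ N < K ⊓ N := by
  refine (inf_le_inf_right N hHK.le).lt_of_ne fun hinf =>
    hHK.ne (le_antisymm hHK.le fun k hk => ?_)
  have hk' : k ∈ (↑(H ⊔ N) : Set G) := hsup ▸ mem_sup_left hk
  rw [mul_normal H N] at hk'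
  obtain ⟨h, hh, n, hn, rfl⟩ := hk'
  have hnK : n ∈ K ⊓ N := ⟨by simpa using mul_mem (inv_mem (hHK.le hh)) hk, hn⟩
  exact mul_mem hh (hinf ▸ hnK).1

theorem centralizer_subgroupOf {N : Subgroup G} {T : Set G} (hT : T ⊆ N) :
    (centralizer T).subgroupOf N = centralizer (((↑) : N → G) ⁻¹' T) := by
  ext n
  simp only [mem_subgroupOf, mem_centralizer_iff, Set.mem_preimage]
  refine ⟨fun h m hm => Subtype.ext (h m hm), fun h t ht => ?_⟩
  exact congrArg Subtype.val (h ⟨t, hT ht⟩ ht)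

theorem centralizer_centralizer_inf (S : Set G) (N : Subgroup G) :
    centralizer (centralizer (↑(centralizer S ⊓ N) : Set G) : Set G) ⊓ N =
      centralizer S ⊓ N := by
  refine le_antisymm (inf_le_inf_right N (centralizer_le ?_)) (le_inf ?_ inf_le_right)
  · exact Set.subset_centralizer_centralizer.trans (centralizer_le inf_le_left)
  · exact fun x hx => Set.subset_centralizer_centralizer hx

end Subgroup

section CentralizerDimension

variable {G : Type*} [Group G]

theorem cdim_eq_krullDim :
    (cdim G : WithBot ℕ∞) = krullDim (Set.range (centralizer : Set G → Subgroup G)) := by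
  have : Nonempty (Set.range (centralizer : Set G → Subgroup G)) := ⟨⟨_, ∅, rfl⟩⟩
  rw [← iSup_length_strictMono_eq_krullDim, cdim]
  congr! 4 with n
  constructor
  · rintro ⟨c, hc, hcent⟩
    exact ⟨fun i => ⟨c i, (hcent i).imp fun _ => Eq.symm⟩, fun i j hij => hc hij⟩
  · rintro ⟨c, hc⟩
    exact ⟨fun i => c i, fun i j hij => hc hij, fun i => (c i).2.imp fun _ => Eq.symm⟩

theorem subgroupChainLength_eq_krullDim :
    (subgroupChainLength G : WithBot ℕ∞) = krullDim (Subgroup G) :=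
  iSup_length_strictMono_eq_krullDim

theorem krullDim_centralizer_image_powerset_le (N : Subgroup G) [N.Normal] {l k : ℕ}
    (hl : krullDim (Subgroup (G ⧸ N)) ≤ l)
    (hk : krullDim (Set.range (centralizer : Set N → Subgroup N)) ≤ k) :
    krullDim (centralizer '' 𝒫 (N : Set G)) ≤ ((k + 1) * l + k : ℕ) := by
  let g : centralizer '' 𝒫 (N : Set G) → Set.range (centralizer : Set N → Subgroup N) :=
    fun H => ⟨(H : Subgroup G).subgroupOf N, by
      obtain ⟨T, hT, hH⟩ := H.2
      exact ⟨_, by rw [← hH, centralizer_subgroupOf hT]⟩⟩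
  refine krullDim_le_of_strictMono_on_fibers
    (f := fun H : centralizer '' 𝒫 (N : Set G) => (H : Subgroup G).map (QuotientGroup.mk' N))
    (fun H K hHK => map_mono hHK) (g := g) (fun H K hmap hHK => ?_) hl hk
  rw [map_eq_map_iff, QuotientGroup.ker_mk'] at hmap
  have hinf := inf_lt_inf_of_lt_of_sup_eq hHK hmap
  exact (comap_mono hHK.le).lt_of_ne fun h => hinf.ne (subgroupOf_inj.mp h)

theorem krullDim_range_centralizer_le (N : Subgroup G) [N.Normal] {l m : ℕ}
    (hl : krullDim (Subgroup (G ⧸ N)) ≤ l)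
    (hm : krullDim (centralizer '' 𝒫 (N : Set G)) ≤ m) :
    krullDim (Set.range (centralizer : Set G → Subgroup G)) ≤ ((m + 1) * l + m : ℕ) := by
  let g : Set.range (centralizer : Set G → Subgroup G) →
      (centralizer '' 𝒫 (N : Set G))ᵒᵈ :=
    fun H => OrderDual.toDual ⟨centralizer (↑((H : Subgroup G) ⊓ N) : Set G), _,
      fun _ hx => hx.2, rfl⟩
  refine krullDim_le_of_strictMono_on_fibers
    (f := fun H : Set.range (centralizer : Set G → Subgroup G) =>
      (H : Subgroup G).map (QuotientGroup.mk' N))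
    (fun H K hHK => map_mono hHK) (g := g) (fun H K hmap hHK => ?_) hl
    (by rwa [krullDim_orderDual])
  rw [map_eq_map_iff, QuotientGroup.ker_mk'] at hmap
  have hinf := inf_lt_inf_of_lt_of_sup_eq hHK hmap
  obtain ⟨S, hS⟩ := H.2
  obtain ⟨T, hT⟩ := K.2
  refine (centralizer_le (inf_le_inf_right N hHK.le)).lt_of_ne fun h => hinf.ne ?_
  rw [← hS, ← hT, ← centralizer_centralizer_inf S, ← centralizer_centralizer_inf T, hS, hT]
  exact congrArg (fun X : Subgroup G => centralizer (X : Set G) ⊓ N) h.symm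

end CentralizerDimension

theorem cdim_le_of_quotient_finite_length
    (G : Type*) [Group G] (N : Subgroup G) [N.Normal] (l k : ℕ)
    (hl : subgroupChainLength (G ⧸ N) = (l : ℕ∞))
    (hk : cdim N = (k : ℕ∞)) :
    cdim G ≤ (((l + 1) ^ 2 * (k + 1) : ℕ) : ℕ∞) := by
  have hQ : krullDim (Subgroup (G ⧸ N)) ≤ l := by
    rw [← subgroupChainLength_eq_krullDim, hl]; rfl
  have hN : krullDim (Set.range (centralizer : Set N → Subgroup N)) ≤ k := by
    rw [← cdim_eq_krullDim, hk]; rfl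
  have hG := krullDim_range_centralizer_le N hQ (krullDim_centralizer_image_powerset_le N hQ hN)
  rw [← cdim_eq_krullDim] at hG
  refine (WithBot.coe_le_coe.mp hG).trans (Nat.cast_le.mpr ?_)
  nlinarith
end

section
/- Let K be a field and n a natural number. Then the c-dimension of the general linear group GL_n(K) is at most n² + 1. -/
/-!
Send a subgroup `H` of the units of a finite-dimensional `K`-algebra `A` to the `K`-span of `H`
in `A`. This is monotone, and it reflects inclusions into centralizers: the span of the
centralizer of `S` lies in the centralizer algebra of `S`, whose units are exactly the centralizer
of `S`. A strict chain of centralizers therefore becomes a strict chain of subspaces of `A`, so its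
length is at most `dim A`, which is `n²` for `A = Mₙ(K)`.
-/

section

open Submodule

variable {K A : Type*}

section CommSemiring

variable [CommSemiring K] [Semiring A] [Algebra K A]

theorem Subgroup.le_centralizer_of_span_le {H : Subgroup Aˣ} {S : Set Aˣ}
    (h : span K (Units.val '' (H : Set Aˣ)) ≤ span K (Units.val '' (centralizer S : Set Aˣ))) :
    H ≤ centralizer S := by
  have span_centralizer_le :
      span K (Units.val '' (centralizer S : Set Aˣ)) ≤
        Subalgebra.toSubmodule (Subalgebra.centralizer K (Units.val '' S)) := by
    rw [span_le]
    rintro _ ⟨u, hu, rfl⟩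
    rw [SetLike.mem_coe, Subalgebra.mem_toSubmodule, Subalgebra.mem_centralizer_iff]
    rintro _ ⟨s, hs, rfl⟩
    exact congrArg Units.val (mem_centralizer_iff.mp hu s hs)
  intro u hu
  have hu' := span_centralizer_le (h (subset_span ⟨u, hu, rfl⟩))
  rw [Subalgebra.mem_toSubmodule, Subalgebra.mem_centralizer_iff] at hu'
  exact mem_centralizer_iff.mpr fun s hs => Units.ext (hu' s ⟨s, hs, rfl⟩)

theorem IsCentralizerChain.strictMono_span {m : ℕ} {c : Fin (m + 1) → Subgroup Aˣ}
    (hc : IsCentralizerChain c) :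
    StrictMono fun i => span K (Units.val '' (c i : Set Aˣ)) := by
  intro i j hij
  refine (span_mono (Set.image_mono (hc.1 hij).le)).lt_of_not_ge fun hle => ?_
  obtain ⟨S, hS⟩ := hc.2 i
  have hji : c j ≤ c i := by
    rw [hS] at hle ⊢
    exact Subgroup.le_centralizer_of_span_le hle
  exact (hc.1 hij).not_ge hji

end CommSemiring

variable [Field K] [Ring A] [Algebra K A]

theorem IsCentralizerChain.le_finrank [FiniteDimensional K A] {m : ℕ}
    {c : Fin (m + 1) → Subgroup Aˣ} (hc : IsCentralizerChain c) :
    (m : ℕ∞) ≤ Module.finrank K A := by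
  let p := LTSeries.mk m _ (hc.strictMono_span (K := K))
  calc (m : ℕ∞) = p.length := rfl
    _ ≤ Order.height p.last := Order.length_le_height_last
    _ ≤ Order.height (⊤ : Submodule K A) := Order.height_mono le_top
    _ = Module.finrank K A := by
      rw [← Module.length_eq_height, Module.length_eq_finrank]

variable (K) in
theorem cdim_units_le_finrank [FiniteDimensional K A] : cdim Aˣ ≤ Module.finrank K A :=
  iSup₂_le fun _ ⟨_, hc⟩ => hc.le_finrank (K := K)

end

theorem cdim_GL_le (K : Type*) [Field K] (n : ℕ) :
    cdim (GL (Fin n) K) ≤ ((n ^ 2 + 1 : ℕ) : ℕ∞) :=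
  calc cdim (GL (Fin n) K) ≤ Module.finrank K (Matrix (Fin n) (Fin n) K) :=
        cdim_units_le_finrank K
    _ = ((n ^ 2 : ℕ) : ℕ∞) := by simp [Module.finrank_matrix, sq]
    _ ≤ ((n ^ 2 + 1 : ℕ) : ℕ∞) := by gcongr; omega
end

section
/- For every natural number n, the c-dimension of the symmetric group Sym_n is at most n² + 1, and the c-dimension of the alternating group Alt_n is at most n² + 1. -/
/-!
Every strict chain of subgroups of a finite group `G` at least doubles the order at each
step, so its length is at most `log₂ |G|`; chains of centralizers are chains of subgroups.
Since `n! ≤ nⁿ ≤ 2^(n²)`, both `Sym_n` and its subgroup `Alt_n` have order at most `2^(n² + 1)`.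
-/

namespace Subgroup

variable {G : Type*} [Group G] [Finite G]

theorem two_mul_card_le_card_of_lt {H K : Subgroup G} (h : H < K) :
    2 * Nat.card H ≤ Nat.card K := by
  obtain ⟨k, hk⟩ := card_dvd_of_le h.le
  have hlt : Nat.card H * 1 < Nat.card H * k := by
    rw [mul_one, ← hk]
    exact (card_le_of_le h.le).lt_of_ne fun e => h.ne (eq_of_le_of_card_ge h.le e.ge)
  rw [hk, mul_comm]
  exact Nat.mul_le_mul_left _ (Nat.lt_of_mul_lt_mul_left hlt)

theorem two_pow_le_card_of_strictMono {m : ℕ} {c : Fin (m + 1) → Subgroup G}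
    (hc : StrictMono c) : 2 ^ m ≤ Nat.card G := by
  have card_chain_ge : ∀ i : Fin (m + 1), 2 ^ (i : ℕ) ≤ Nat.card (c i) := by
    intro i
    induction i using Fin.induction with
    | zero => exact Nat.card_pos (α := c 0)
    | succ i ih =>
      calc 2 ^ ((i.succ : Fin (m + 1)) : ℕ) = 2 * 2 ^ (i : ℕ) := by
            rw [Fin.val_succ, pow_succ']
        _ ≤ 2 * Nat.card (c i.castSucc) := Nat.mul_le_mul_left 2 ih
        _ ≤ Nat.card (c i.succ) := two_mul_card_le_card_of_lt (hc i.castSucc_lt_succ)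
  simpa using (card_chain_ge (Fin.last m)).trans (card_le_card_group _)

end Subgroup

theorem cdim_le_subgroupChainLength (G : Type*) [Group G] :
    cdim G ≤ subgroupChainLength G :=
  iSup_mono fun _ => iSup_mono' fun ⟨c, hc, _⟩ => ⟨⟨c, hc⟩, le_rfl⟩

theorem subgroupChainLength_le_of_card_le_two_pow {G : Type*} [Group G] [Finite G] {k : ℕ}
    (h : Nat.card G ≤ 2 ^ k) : subgroupChainLength G ≤ k :=
  iSup₂_le fun _ ⟨_, hc⟩ => Nat.cast_le.2 <|
    (Nat.pow_le_pow_iff_right one_lt_two).1 ((Subgroup.two_pow_le_card_of_strictMono hc).trans h)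

theorem Nat.factorial_le_two_pow_sq_add_one (n : ℕ) : n.factorial ≤ 2 ^ (n ^ 2 + 1) :=
  calc n.factorial ≤ n ^ n := n.factorial_le_pow
    _ ≤ (2 ^ n) ^ n := Nat.pow_le_pow_left n.lt_two_pow_self.le n
    _ = 2 ^ (n ^ 2) := by rw [← pow_mul, sq]
    _ ≤ 2 ^ (n ^ 2 + 1) := Nat.pow_le_pow_right two_pos (n ^ 2).le_succ

theorem cdim_symmetric_and_alternating_le (n : ℕ) :
    cdim (Equiv.Perm (Fin n)) ≤ ((n ^ 2 + 1 : ℕ) : ℕ∞) ∧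
    cdim (alternatingGroup (Fin n)) ≤ ((n ^ 2 + 1 : ℕ) : ℕ∞) := by
  have hperm : Nat.card (Equiv.Perm (Fin n)) ≤ 2 ^ (n ^ 2 + 1) := by
    rw [Nat.card_perm, Nat.card_fin]
    exact Nat.factorial_le_two_pow_sq_add_one n
  have halt : Nat.card (alternatingGroup (Fin n)) ≤ 2 ^ (n ^ 2 + 1) :=
    (Subgroup.card_le_card_group _).trans hperm
  exact ⟨(cdim_le_subgroupChainLength _).trans (subgroupChainLength_le_of_card_le_two_pow hperm),
    (cdim_le_subgroupChainLength _).trans (subgroupChainLength_le_of_card_le_two_pow halt)⟩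
end

section
/- Let G be a locally finite group, let Q be a component of G, and let R be the locally soluble radical of G. Denote by Q̄ the image of Q under the natural homomorphism G → G/R. Then the group of induced automorphisms N_G(Q)/C_G(Q) is isomorphic to N_{G/R}(Q̄)/C_{G/R}(Q̄). -/
/-!
The map `g ↦ gR` sends `N_G(Q)` to `N_{G/R}(Q̄)` and `C_G(Q)` to `C_{G/R}(Q̄)`.
A locally finite, locally soluble simple group is abelian, so `Q ≰ R`, and `Q ∩ R`, a proper
normal subgroup of `Q`, is central in `Q`.
Onto: if `gR` normalizes `Q̄`, then `Q^g` is a component with the same image as `Q`; distinct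
components commute, and `[Q, Q^g] = 1` would give `Q̄ = [Q̄, Q̄] = 1`.
Kernel: if `g` normalizes `Q` and `gR` centralizes `Q̄`, then `[Q, g] ≤ Q ∩ R` commutes with `Q`,
and the three subgroups lemma with `Q = [Q, Q]` gives `[Q, g] = 1`.
-/

open Subgroup Function

section LocalProperties

variable {H K : Type*} [Group H] [Group K]

theorem exists_finset_map_closure_eq {f : H →* K} (hf : Surjective f) (S : Finset K) :
    ∃ T : Finset H, (closure (T : Set H)).map f = closure (S : Set K) := by
  classical
  refine ⟨S.image (surjInv hf), ?_⟩
  rw [MonoidHom.map_closure, Finset.coe_image, Set.image_image]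
  simp only [surjInv_eq hf, Set.image_id']

theorem LocallyFiniteGroup.of_injective {f : H →* K} (hf : Injective f)
    (hK : LocallyFiniteGroup K) : LocallyFiniteGroup H := by
  classical
  intro S
  refine Set.Finite.of_finite_image ?_ hf.injOn
  rw [← coe_map, MonoidHom.map_closure, ← Finset.coe_image]
  exact hK _

theorem LocallyFiniteGroup.of_surjective {f : H →* K} (hf : Surjective f)
    (hH : LocallyFiniteGroup H) : LocallyFiniteGroup K := by
  intro S
  obtain ⟨T, hT⟩ := exists_finset_map_closure_eq hf S
  rw [← hT, coe_map]
  exact (hH T).image f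

theorem LocallySolvable.of_injective {f : H →* K} (hf : Injective f)
    (hK : LocallySolvable K) : LocallySolvable H := by
  classical
  intro S
  have hS : (closure (S : Set H)).map f = closure ((S.image f : Finset K) : Set K) := by
    rw [MonoidHom.map_closure, Finset.coe_image]
  have : Group.IsSolvable ((closure (S : Set H)).map f) := hS ▸ hK _
  exact Group.isSolvable_of_isSolvable_injective
    (f := (equivMapOfInjective (closure (S : Set H)) f hf).toMonoidHom) (MulEquiv.injective _)

theorem LocallySolvable.of_surjective {f : H →* K} (hf : Surjective f)
    (hH : LocallySolvable H) : LocallySolvable K := by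
  intro S
  obtain ⟨T, hT⟩ := exists_finset_map_closure_eq hf S
  have : Group.IsSolvable (closure (T : Set H)) := hH T
  rw [← hT]
  exact Group.isSolvable_of_surjective (f.subgroupMap_surjective _)

end LocalProperties

theorem exists_finset_mem_closure_conj_of_mem_normalClosure {G : Type*} [Group G] {x y : G}
    (h : y ∈ normalClosure {x}) :
    ∃ W : Finset G, y ∈ closure ((fun g => g * x * g⁻¹) '' W) := by
  classical
  induction h using closure_induction with
  | mem c hc =>
    obtain ⟨_, rfl, hxc⟩ := Group.mem_conjugatesOfSet_iff.1 hc
    obtain ⟨g, rfl⟩ := isConj_iff.1 hxc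
    exact ⟨{g}, subset_closure (by simp)⟩
  | one => exact ⟨∅, one_mem _⟩
  | mul c d _ _ hc hd =>
    obtain ⟨W₁, h₁⟩ := hc
    obtain ⟨W₂, h₂⟩ := hd
    refine ⟨W₁ ∪ W₂, mul_mem (closure_mono ?_ h₁) (closure_mono ?_ h₂)⟩ <;>
      exact Set.image_mono (by simp)
  | inv c _ hc =>
    obtain ⟨W, hW⟩ := hc
    exact ⟨W, inv_mem hW⟩

theorem Group.IsSolvable.commutator_eq_bot_of_le_normal {K : Type*} [Group K]
    [Group.IsSolvable K] (F : Subgroup K)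
    (hF : ∀ N : Subgroup K, N.Normal → ∀ x ∈ F, x ∈ N → x ≠ 1 → F ≤ N) :
    ⁅F, F⁆ = ⊥ := by
  by_contra hne
  obtain ⟨x, hx, hx1⟩ := (bot_or_exists_ne_one _).resolve_left hne
  have hF_le : ∀ n, F ≤ derivedSeries K n := by
    intro n
    induction n with
    | zero => exact le_top
    | succ n ih =>
      refine hF _ (derivedSeries_normal K _) x (commutator_le_self F hx) ?_ hx1
      rw [derivedSeries_succ]
      exact commutator_mono ih ih hx
  obtain ⟨n, hn⟩ := Group.IsSolvable.solvable (G := K)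
  exact hx1 (mem_bot.1 (hn ▸ hF_le n (commutator_le_self F hx)))

theorem IsSimpleGroup.exists_finset_mem_closure_conj {S : Type*} [Group S] [IsSimpleGroup S]
    {x : S} (hx : x ≠ 1) (y : S) :
    ∃ W : Finset S, y ∈ closure ((fun g => g * x * g⁻¹) '' W) := by
  have htop : normalClosure {x} = ⊤ :=
    (IsSimpleGroup.eq_bot_or_eq_top_of_normal _ normalClosure_normal).resolve_left
      (by simpa [normalClosure_eq_bot_iff] using hx)
  exact exists_finset_mem_closure_conj_of_mem_normalClosure (htop ▸ mem_top y)

theorem IsSimpleGroup.isMulCommutative_of_locallySolvable {S : Type*} [Group S] [IsSimpleGroup S]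
    (hlf : LocallyFiniteGroup S) (hls : LocallySolvable S) : IsMulCommutative S := by
  classical
  refine ⟨⟨fun a b => ?_⟩⟩
  set F := closure (({a, b} : Finset S) : Set S)
  have hFfin : (F : Set S).Finite := hlf {a, b}
  choose W hW using fun (x y : S) (hx : x ≠ 1) => exists_finset_mem_closure_conj hx y
  -- `H` is finitely generated, hence soluble, and contains the conjugators needed inside `F`
  set U : Finset S := {a, b} ∪ hFfin.toFinset.biUnion fun x =>
    hFfin.toFinset.biUnion fun y => if hx : x = 1 then ∅ else W x y hx
  set H := closure (U : Set S)
  have : Group.IsSolvable H := hls U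
  have hFH : F ≤ H := closure_mono (Finset.coe_subset.2 Finset.subset_union_left)
  have hWH : ∀ x ∈ F, ∀ y ∈ F, ∀ hx : x ≠ 1, (W x y hx : Set S) ⊆ H :=
    fun x hx y hy hx1 g hg =>
    subset_closure (Finset.mem_union_right _ (Finset.mem_biUnion.2 ⟨x, hFfin.mem_toFinset.2 hx,
      Finset.mem_biUnion.2 ⟨y, hFfin.mem_toFinset.2 hy, by rwa [dif_neg hx1]⟩⟩))
  have hcomm := Group.IsSolvable.commutator_eq_bot_of_le_normal (F.subgroupOf H)
    (fun N hN x hxF hxN hx1 y hyF => by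
      have hx1' : (x : S) ≠ 1 := fun h => hx1 (Subtype.ext h)
      have hsub : (fun g => g * (x : S) * g⁻¹) '' W x y hx1' ⊆ N.map H.subtype := by
        rintro _ ⟨g, hg, rfl⟩
        have hgH := hWH _ hxF _ hyF hx1' hg
        exact ⟨⟨g, hgH⟩ * x * ⟨g, hgH⟩⁻¹, hN.conj_mem x hxN _, rfl⟩
      exact (mem_map_iff_mem H.subtype_injective).1 (closure_le _ |>.2 hsub (hW _ _ hx1')))
  have ha : a ∈ F := subset_closure (by simp)
  have hb : b ∈ F := subset_closure (by simp)
  rw [commutator_eq_bot_iff_le_centralizer] at hcomm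
  exact congrArg Subtype.val (mem_centralizer_iff.1
    (hcomm (x := ⟨b, hFH hb⟩) (mem_subgroupOf.2 hb)) ⟨a, hFH ha⟩ (mem_subgroupOf.2 ha))

section Quasisimple

variable {X : Type*} [Group X]

theorem IsQuasisimple.eq_top_or_le_center (hX : IsQuasisimple X) (N : Subgroup X) [N.Normal] :
    N = ⊤ ∨ N ≤ center X := by
  rcases hX.2.eq_bot_or_eq_top_of_normal _ (Normal.map ‹_› _ (QuotientGroup.mk'_surjective _))
    with h | h
  · right
    rwa [Subgroup.map_eq_bot_iff, QuotientGroup.ker_mk'] at h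
  · left
    have hsup : N ⊔ center X = ⊤ := by
      simpa [comap_map_eq] using congrArg (comap (QuotientGroup.mk' (center X))) h
    exact top_le_iff.1
      (hX.1 ▸ Normal.commutator_le_of_self_sup_commutative_eq_top hsup inferInstance)

theorem IsQuasisimple.not_locallySolvable (hX : IsQuasisimple X) (hlf : LocallyFiniteGroup X) :
    ¬ LocallySolvable X := by
  intro hls
  have : IsSimpleGroup (X ⧸ center X) := hX.2
  have hcomm := IsSimpleGroup.isMulCommutative_of_locallySolvable
    (hlf.of_surjective (QuotientGroup.mk'_surjective (center X)))
    (hls.of_surjective (QuotientGroup.mk'_surjective (center X)))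
  have hcenter : center X = ⊤ :=
    top_le_iff.1 (hX.1 ▸ Normal.quotient_commutative_iff_commutator_le.1 hcomm)
  obtain ⟨u, v, huv⟩ := exists_pair_ne (X ⧸ center X)
  induction u using QuotientGroup.induction_on
  induction v using QuotientGroup.induction_on
  exact huv (QuotientGroup.eq.2 (hcenter ▸ mem_top _))

theorem IsQuasisimple.of_mulEquiv {Y : Type*} [Group Y] (e : X ≃* Y) (hX : IsQuasisimple X) :
    IsQuasisimple Y := by
  have hcenter : (center X).map e.toMonoidHom = center Y := by
    ext y
    rw [mem_map_equiv, mem_center_iff, mem_center_iff]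
    exact ⟨fun h z => e.symm.injective (by simpa using h (e.symm z)),
      fun h z => e.injective (by simpa using h (e z))⟩
  have : IsSimpleGroup (X ⧸ center X) := hX.2
  refine ⟨?_, (QuotientGroup.congr _ _ e hcenter).symm.isSimpleGroup⟩
  rw [_root_.commutator_def, ← map_top_of_surjective e.toMonoidHom e.surjective,
    ← map_commutator, ← _root_.commutator_def, hX.1]

end Quasisimple

section Subnormal

variable {G : Type*} [Group G]

theorem IsQuasisimple.commutator_self {Q : Subgroup G} (hQ : IsQuasisimple Q) : ⁅Q, Q⁆ = Q := by
  rw [← Q.map_subtype_commutator, hQ.1, ← MonoidHom.range_eq_map, range_subtype]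

theorem IsQuasisimple.eq_or_commutator_eq_bot {Q N : Subgroup G} (hQ : IsQuasisimple Q)
    (hNQ : N ≤ Q) (hN : Q ≤ normalizer (N : Set G)) : N = Q ∨ ⁅Q, N⁆ = ⊥ := by
  have := normal_subgroupOf_of_le_normalizer hN
  rcases hQ.eq_top_or_le_center (N.subgroupOf Q) with h | h
  · exact Or.inl (le_antisymm hNQ (subgroupOf_eq_top.1 h))
  · refine Or.inr (commutator_eq_bot_iff_le_centralizer.2 fun q hq n hn => ?_)
    have hn' : (⟨n, hNQ hn⟩ : Q) ∈ center Q := h (mem_subgroupOf.2 hn)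
    exact (congrArg Subtype.val (mem_center_iff.1 hn' ⟨q, hq⟩)).symm

theorem IsQuasisimple.commutator_inf_eq_bot {Q N : Subgroup G} [N.Normal] (hQ : IsQuasisimple Q)
    (hQN : ¬ Q ≤ N) : ⁅Q ⊓ N, Q⁆ = ⊥ := by
  have hnorm : Q ≤ normalizer ((Q ⊓ N : Subgroup G) : Set G) :=
    (le_inf le_normalizer (normalizer_eq_top (H := N) ▸ le_top)).trans
      inf_normalizer_le_normalizer_inf
  rcases hQ.eq_or_commutator_eq_bot inf_le_left hnorm with h | h
  · exact (hQN (h ▸ inf_le_right)).elim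
  · rwa [commutator_comm]

/-- A consequence of the three subgroups lemma. -/
theorem commutator_eq_bot_of_commutator_le {Q N M : Subgroup G} (hQ : ⁅Q, Q⁆ = Q)
    (hle : ⁅Q, N⁆ ≤ M) (hM : ⁅M, Q⁆ = ⊥) : ⁅Q, N⁆ = ⊥ := by
  have h₁ : ⁅⁅Q, N⁆, Q⁆ = ⊥ := le_bot_iff.1 (hM ▸ commutator_mono hle le_rfl)
  have h₂ : ⁅⁅N, Q⁆, Q⁆ = ⊥ := commutator_comm N Q ▸ h₁
  simpa only [hQ] using commutator_commutator_eq_bot_of_rotate h₁ h₂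

/-- Subnormality of `H` in `K`, built from the bottom of a chain `H ⊴ ⋯ ⊴ K`, unlike
`Subgroup.IsSubnormal`: induction then peels off the top normal step. -/
inductive IsSubnormalIn (H : Subgroup G) : Subgroup G → Prop
  | refl : IsSubnormalIn H H
  | step {L K : Subgroup G} : IsSubnormalIn H L → L ≤ K → K ≤ normalizer (L : Set G) →
      IsSubnormalIn H K

namespace IsSubnormalIn

variable {H K L : Subgroup G}

theorem le (h : IsSubnormalIn H K) : H ≤ K := by
  induction h with
  | refl => exact le_rfl
  | step _ hLK _ ih => exact ih.trans hLK

theorem inf (h : IsSubnormalIn H K) (M : Subgroup G) : IsSubnormalIn (H ⊓ M) (K ⊓ M) := by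
  induction h with
  | refl => exact refl
  | step _ hLK hK ih =>
    exact ih.step (inf_le_inf_right M hLK)
      ((le_inf (inf_le_left.trans hK) (inf_le_right.trans le_normalizer)).trans
        inf_normalizer_le_normalizer_inf)

theorem of_le (h : IsSubnormalIn H K) (hHL : H ≤ L) (hLK : L ≤ K) : IsSubnormalIn H L := by
  simpa only [inf_eq_left.2 hHL, inf_eq_right.2 hLK] using h.inf L

theorem map {G' : Type*} [Group G'] (f : G →* G') (h : IsSubnormalIn H K) :
    IsSubnormalIn (H.map f) (K.map f) := by
  induction h with
  | refl => exact refl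
  | step _ hLK hK ih => exact ih.step (map_mono hLK) ((map_mono hK).trans (le_normalizer_map f))

end IsSubnormalIn

theorem IsSubnormal.isSubnormalIn_top {H : Subgroup G} (h : _root_.IsSubnormal H) :
    IsSubnormalIn H ⊤ := by
  obtain ⟨n, c, hc0, hcn, hc⟩ := h
  have : ∀ i, IsSubnormalIn H (c i) := by
    intro i
    induction i using Fin.induction with
    | zero => exact hc0 ▸ .refl
    | succ i ih =>
      exact ih.step (hc i).1 ((normal_subgroupOf_iff_le_normalizer (hc i).1).1 (hc i).2)
  exact hcn ▸ this (Fin.last n)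

theorem IsSubnormalIn.le_or_commutator_eq_bot {Q K N : Subgroup G} (hsn : IsSubnormalIn Q K)
    (hQ : IsQuasisimple Q) (hNK : N ≤ K) (hN : K ≤ normalizer (N : Set G)) :
    Q ≤ N ∨ ⁅Q, N⁆ = ⊥ := by
  induction hsn generalizing N with
  | refl => exact (hQ.eq_or_commutator_eq_bot hNK hN).imp ge_of_eq id
  | @step L K hsn hLK hK ih =>
    have hNL : L ≤ normalizer ((N ⊓ L : Subgroup G) : Set G) :=
      (le_inf (hLK.trans hN) le_normalizer).trans inf_normalizer_le_normalizer_inf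
    rcases ih inf_le_right hNL with h | h
    · exact Or.inl (h.trans inf_le_left)
    · refine Or.inr (commutator_eq_bot_of_commutator_le hQ.commutator_self (le_inf ?_ ?_)
        (commutator_comm (N ⊓ L) Q ▸ h))
      · exact le_normalizer_iff_commutator_le_right.1 ((hsn.le.trans hLK).trans hN)
      · exact (commutator_mono hsn.le le_rfl).trans
          (le_normalizer_iff_commutator_le_left.1 (hNK.trans hK))

theorem IsSubnormalIn.le_or_commutator_eq_bot_of_isSubnormalIn {Q H K : Subgroup G}
    (hH : IsSubnormalIn H K) (hQK : IsSubnormalIn Q K) (hQ : IsQuasisimple Q) :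
    Q ≤ H ∨ ⁅Q, H⁆ = ⊥ := by
  induction hH with
  | refl => exact Or.inl hQK.le
  | step hHL hLK hK ih =>
    rcases hQK.le_or_commutator_eq_bot hQ hLK hK with h | h
    · exact ih (hQK.of_le h hLK)
    · exact Or.inr (le_bot_iff.1 (h ▸ commutator_mono le_rfl hHL.le))

theorem IsQuasisimple.eq_or_commutator_eq_bot_of_isSubnormalIn_top {Q K : Subgroup G}
    (hQ : IsQuasisimple Q) (hQsn : IsSubnormalIn Q ⊤) (hK : IsQuasisimple K)
    (hKsn : IsSubnormalIn K ⊤) : Q = K ∨ ⁅Q, K⁆ = ⊥ := by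
  rcases hKsn.le_or_commutator_eq_bot_of_isSubnormalIn hQsn hQ with hQK | h
  · rcases hQsn.le_or_commutator_eq_bot_of_isSubnormalIn hKsn hK with hKQ | h
    · exact Or.inl (le_antisymm hQK hKQ)
    · exact Or.inr (commutator_comm K Q ▸ h)
  · exact Or.inr h

end Subnormal

section InducedAut

variable {G G' : Type*} [Group G] [Group G']

abbrev Subgroup.InducedAut (H : Subgroup G) : Type _ :=
  normalizer (H : Set G) ⧸ (centralizer (H : Set G)).subgroupOf (normalizer (H : Set G))

theorem IsComponent.mem_normalizer_of_map_mem_normalizer {Q : Subgroup G} (hQ : IsComponent Q)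
    {f : G →* G'} (hQf : ¬ Q ≤ f.ker) {y : G}
    (hy : f y ∈ normalizer ((Q.map f : Subgroup G') : Set G')) :
    y ∈ normalizer (Q : Set G) := by
  rw [mem_normalizer_iff_map_conj_eq] at hy ⊢
  set Q' := Q.map (MulAut.conj y : G →* G)
  have hsn : IsSubnormalIn Q ⊤ := hQ.1.isSubnormalIn_top
  have hsn' : IsSubnormalIn Q' ⊤ := by
    simpa only [map_top_of_surjective (MulAut.conj y : G →* G) (MulAut.conj y).surjective]
      using hsn.map (MulAut.conj y : G →* G)
  have hQ' : IsQuasisimple Q' :=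
    hQ.2.of_mulEquiv (Q.equivMapOfInjective _ (MulAut.conj y).injective)
  have hmap : Q'.map f = Q.map f := by
    have : (f.comp (MulAut.conj y : G →* G)) = (MulAut.conj (f y) : G' →* G').comp f := by
      ext; simp
    rw [map_map, this, ← map_map, hy]
  rcases hQ.2.eq_or_commutator_eq_bot_of_isSubnormalIn_top hsn hQ' hsn' with h | h
  · exact h.symm
  · refine (hQf ?_).elim
    have : ⁅Q.map f, Q'.map f⁆ = ⊥ := by rw [← map_commutator, h, Subgroup.map_bot]
    rwa [hmap, ← map_commutator, hQ.2.commutator_self, Subgroup.map_eq_bot_iff] at this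

theorem IsQuasisimple.mem_centralizer_of_map_mem_centralizer {Q : Subgroup G}
    (hQ : IsQuasisimple Q) {f : G →* G'} (hcen : ⁅Q ⊓ f.ker, Q⁆ = ⊥) {g : G}
    (hg : g ∈ normalizer (Q : Set G))
    (hfg : f g ∈ centralizer ((Q.map f : Subgroup G') : Set G')) :
    g ∈ centralizer (Q : Set G) := by
  have hker : ⁅Q, zpowers g⁆ ≤ f.ker := by
    rw [← Subgroup.map_eq_bot_iff, map_commutator, MonoidHom.map_zpowers, commutator_comm,
      commutator_eq_bot_iff_le_centralizer]
    exact zpowers_le.2 hfg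
  have hle : ⁅Q, zpowers g⁆ ≤ Q ⊓ f.ker :=
    le_inf (le_normalizer_iff_commutator_le_left.1 (zpowers_le.2 hg)) hker
  have := commutator_eq_bot_of_commutator_le hQ.commutator_self hle hcen
  rw [commutator_comm, commutator_eq_bot_iff_le_centralizer] at this
  exact zpowers_le.1 this

theorem Subgroup.nonempty_inducedAut_mulEquiv_map {f : G →* G'} (hf : Surjective f)
    {H : Subgroup G}
    (hN : ∀ g, f g ∈ normalizer ((H.map f : Subgroup G') : Set G') →
      g ∈ normalizer (H : Set G))
    (hC : ∀ g ∈ normalizer (H : Set G),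
      f g ∈ centralizer ((H.map f : Subgroup G') : Set G') → g ∈ centralizer (H : Set G)) :
    Nonempty (H.InducedAut ≃* (H.map f).InducedAut) := by
  let φ : normalizer (H : Set G) →* (H.map f).InducedAut := (QuotientGroup.mk' _).comp
    ((f.comp (normalizer (H : Set G)).subtype).codRestrict _
      fun g => le_normalizer_map f ⟨g, g.2, rfl⟩)
  have hsurj : Surjective φ := by
    intro z
    obtain ⟨⟨x, hx⟩, rfl⟩ := QuotientGroup.mk'_surjective _ z
    obtain ⟨g, rfl⟩ := hf x
    exact ⟨⟨g, hN g hx⟩, rfl⟩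
  have hker : (centralizer (H : Set G)).subgroupOf (normalizer (H : Set G)) = φ.ker := by
    ext g
    simp only [φ, MonoidHom.mem_ker, MonoidHom.comp_apply, QuotientGroup.mk'_apply,
      QuotientGroup.eq_one_iff, mem_subgroupOf, MonoidHom.codRestrict_apply, coe_subtype]
    refine ⟨fun hg => ?_, hC g g.2⟩
    rw [coe_map]
    exact map_centralizer_le_centralizer_image _ f (mem_map_of_mem f hg)
  exact ⟨(QuotientGroup.quotientMulEquivOfEq hker).trans
    (QuotientGroup.quotientKerEquivOfSurjective φ hsurj)⟩

end InducedAut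

theorem inducedAutomorphisms_of_component_iso_general
    (G : Type*) [Group G] (hG : LocallyFiniteGroup G)
    (Q : Subgroup G) (hQ : IsComponent Q)
    (R : Subgroup G) [R.Normal] (hRls : LocallySolvable R) :
    Nonempty
      ((Subgroup.normalizer (Q : Set G) ⧸ (Subgroup.centralizer (Q : Set G)).subgroupOf (Subgroup.normalizer (Q : Set G))) ≃*
        ((Subgroup.normalizer ((Q.map (QuotientGroup.mk' R) : Subgroup (G ⧸ R)) : Set (G ⧸ R))) ⧸
          (Subgroup.centralizer ((Q.map (QuotientGroup.mk' R) : Subgroup (G ⧸ R)) :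
              Set (G ⧸ R))).subgroupOf (Subgroup.normalizer ((Q.map (QuotientGroup.mk' R) : Subgroup (G ⧸ R)) : Set (G ⧸ R))))) := by
  have hQR : ¬ Q ≤ (QuotientGroup.mk' R).ker := fun h => hQ.2.not_locallySolvable
    (hG.of_injective Q.subtype_injective)
    (hRls.of_injective (inclusion_injective (QuotientGroup.ker_mk' R ▸ h)))
  exact nonempty_inducedAut_mulEquiv_map (QuotientGroup.mk'_surjective R)
    (fun _ hy => hQ.mem_normalizer_of_map_mem_normalizer hQR hy)
    (fun _ hg hgc => hQ.2.mem_centralizer_of_map_mem_centralizer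
      (hQ.2.commutator_inf_eq_bot hQR) hg hgc)

theorem inducedAutomorphisms_of_component_iso
    (G : Type*) [Group G] (hG : LocallyFiniteGroup G)
    (Q : Subgroup G) (hQ : IsComponent Q)
    (R : Subgroup G) [R.Normal] (hRls : LocallySolvable R)
    (hRmax : ∀ N : Subgroup G, N.Normal → LocallySolvable N → N ≤ R) :
    Nonempty
      ((Subgroup.normalizer (Q : Set G) ⧸ (Subgroup.centralizer (Q : Set G)).subgroupOf (Subgroup.normalizer (Q : Set G))) ≃*
        ((Subgroup.normalizer ((Q.map (QuotientGroup.mk' R) : Subgroup (G ⧸ R)) : Set (G ⧸ R))) ⧸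
          (Subgroup.centralizer ((Q.map (QuotientGroup.mk' R) : Subgroup (G ⧸ R)) :
              Set (G ⧸ R))).subgroupOf (Subgroup.normalizer ((Q.map (QuotientGroup.mk' R) : Subgroup (G ⧸ R)) : Set (G ⧸ R))))) :=
  inducedAutomorphisms_of_component_iso_general G hG Q hQ R hRls
end

section
/- Let p be a prime and let E be an elementary abelian p-group of order p^n acting faithfully on a finite nilpotent p'-group Q (i.e., a finite nilpotent group of order coprime to p). Then there exists a strictly descending chain of subgroups E = E₀ > E₁ > E₂ > … > E_n = 1 such that the fixed-point subgroups form a strictly ascending chain C_Q(E₀) < C_Q(E₁) < … < C_Q(E_n). -/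
/-!
It suffices that every `V ≤ E` acting nontrivially on `Q` has a subgroup `H` of index `p` with
`C_Q(V) < C_Q(H)`: the chain is then built downwards from `E`, and faithfulness keeps it going
until `1`.

For abelian `Q` this follows from norms `N_F(m) = ∏_{f ∈ F} f • m`. If `B ≤ V` has index `p²` and
`m ∈ C_Q(B)`, pick a complement `W ≅ C_p²` of `B` in `V`; the `p + 1` subgroups `Z` of order `p` of
`W` cover `W` and meet pairwise in `1`, so `∏_Z N_Z(m) = m ^ p * N_W(m)`. Each `N_Z(m)` lies in
`C_Q(B Z)` with `B Z` of index `p` in `V`, and `N_W(m) ∈ C_Q(V)`; so if no subgroup of index `p`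
of `V` has more fixed points than `V`, then `m ^ p`, hence `m`, is `V`-fixed (`p ∤ |Q|`). This makes
the hypothesis descend to a subgroup of index `p` in `V`, and induction on `|V|` shows that `V`
acts trivially.

For nilpotent `Q` induct on the nilpotency class. If `V` moves a point of `Z(Q)`, apply the abelian
case to `Z(Q)`. Otherwise `V` acts nontrivially on `Q / Z(Q)`, because an element of order `p`
that centralizes `Z(Q)` and fixes `q` modulo `Z(Q)` fixes `q`; the subgroup found for `Q / Z(Q)`
then works for `Q`.
-/

theorem Subgroup.card_sup_of_inf_eq_bot {G : Type*} [Group G] {H K : Subgroup G} [K.Normal]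
    (h : H ⊓ K = ⊥) : Nat.card ↥(H ⊔ K) = Nat.card H * Nat.card K := by
  rw [← relIndex_bot_left (H ⊔ K), ← relIndex_mul_relIndex ⊥ K _ bot_le le_sup_right,
    relIndex_sup_right, ← inf_relIndex_left H K, h, relIndex_bot_left, relIndex_bot_left, mul_comm]

theorem Subgroup.zpowers_eq_of_card_eq_prime {G : Type*} [Group G] {Z : Subgroup G} {p : ℕ}
    (hp : p.Prime) (hZ : Nat.card Z = p) {x : G} (hxZ : x ∈ Z) (hx : x ≠ 1) :
    zpowers x = Z := by
  have : Finite Z := Nat.finite_of_card_ne_zero (hZ ▸ hp.ne_zero)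
  have hle : zpowers x ≤ Z := zpowers_le.2 hxZ
  refine eq_of_le_of_card_ge hle ?_
  rcases (Nat.dvd_prime hp).1 (hZ ▸ card_dvd_of_le hle) with h | h
  · exact absurd (zpowers_eq_bot.1 (card_eq_one.1 h)) hx
  · rw [h, hZ]

theorem Subgroup.mem_of_pow_mem_of_coprime {M : Type*} [Group M] {n : ℕ}
    (hM : (Nat.card M).Coprime n) {C : Subgroup M} {m : M} (h : m ^ n ∈ C) : m ∈ C := by
  obtain ⟨c, hc⟩ := (hM.coprime_dvd_left C.card_subgroup_dvd_card).pow_left_bijective.2 ⟨_, h⟩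
  rw [← hM.pow_left_bijective.1 (congrArg Subtype.val hc)]
  exact c.2

theorem Subgroup.ne_bot_of_card_eq_pow_succ {G : Type*} [Group G] {H : Subgroup G} {p k : ℕ}
    (hp : p.Prime) (hH : Nat.card H = p ^ (k + 1)) : H ≠ ⊥ := fun h => by
  rw [h, card_bot] at hH
  exact (Nat.one_lt_pow k.succ_ne_zero hp.one_lt).ne hH

theorem Fin.strictAnti_cons {α : Type*} [Preorder α] {n : ℕ} {f : Fin n → α} {a : α} :
    StrictAnti (Fin.cons a f : Fin (n + 1) → α) ↔ (∀ j, f j < a) ∧ StrictAnti f :=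
  Fin.liftFun_cons (· > ·)

section ElementaryAbelian

variable {E : Type*} [CommGroup E] {p : ℕ}

theorem complementedLattice_subgroup (hp : p.Prime) (hE : ∀ x : E, x ^ p = 1) :
    ComplementedLattice (Subgroup E) := by
  have : Fact p.Prime := ⟨hp⟩
  have : Module (ZMod p) (Additive E) :=
    AddCommGroup.zmodModule fun x => congrArg Additive.ofMul (hE x.toMul)
  exact (Subgroup.toAddSubgroup.trans (AddSubgroup.toZModSubmodule p) :
    Subgroup E ≃o Submodule (ZMod p) (Additive E)).symm.complementedLattice

theorem exists_inf_eq_bot_sup_eq (hp : p.Prime) (hE : ∀ x : E, x ^ p = 1) {X V : Subgroup E}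
    (hXV : X ≤ V) : ∃ W ≤ V, X ⊓ W = ⊥ ∧ X ⊔ W = V := by
  have := complementedLattice_subgroup hp hE
  obtain ⟨⟨W, hWV⟩, hXW⟩ := exists_isCompl (⟨X, hXV⟩ : Set.Iic V)
  exact ⟨W, hWV, congrArg Subtype.val hXW.inf_eq_bot, congrArg Subtype.val hXW.sup_eq_top⟩

end ElementaryAbelian

section ActionNorm

variable {E M : Type*} [Group E] [Finite E] [CommMonoid M] [MulDistribMulAction E M]

noncomputable def Subgroup.elems (F : Subgroup E) : Finset E := (F : Set E).toFinite.toFinset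

@[simp]
theorem Subgroup.mem_elems {F : Subgroup E} {x : E} : x ∈ F.elems ↔ x ∈ F :=
  Set.Finite.mem_toFinset _

theorem Subgroup.card_elems (F : Subgroup E) : F.elems.card = Nat.card F :=
  (Nat.card_eq_card_finite_toFinset _).symm

noncomputable def actionNorm (F : Subgroup E) (m : M) : M :=
  ∏ f ∈ F.elems, f • m

theorem smul_actionNorm_of_mem {F : Subgroup E} {g : E} (hg : g ∈ F) (m : M) :
    g • actionNorm F m = actionNorm F m := by
  rw [actionNorm, Finset.smul_prod']
  refine Finset.prod_equiv (Equiv.mulLeft g) (fun f => ?_) (fun f _ => (mul_smul g f m).symm)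
  simpa using (F.mul_mem_cancel_left hg).symm

theorem smul_actionNorm_of_commute {F : Subgroup E} {g : E} (hgF : ∀ f ∈ F, Commute g f) {m : M}
    (hgm : g • m = m) : g • actionNorm F m = actionNorm F m := by
  rw [actionNorm, Finset.smul_prod']
  refine Finset.prod_congr rfl fun f hf => ?_
  rw [smul_smul, (hgF f (Subgroup.mem_elems.1 hf)).eq, mul_smul, hgm]

theorem actionNorm_eq_mul_prod_erase_one [DecidableEq E] (F : Subgroup E) (m : M) :
    actionNorm F m = m * ∏ f ∈ F.elems.erase 1, f • m := by
  rw [actionNorm, ← Finset.mul_prod_erase _ _ (Subgroup.mem_elems.2 F.one_mem), one_smul]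

end ActionNorm

section Lines

variable {E : Type*} [Group E] [Finite E] [DecidableEq E]

noncomputable def lines (p : ℕ) (W : Subgroup E) : Finset (Subgroup E) :=
  (Set.toFinite {Z : Subgroup E | Z ≤ W ∧ Nat.card Z = p}).toFinset

variable {p : ℕ}

omit [DecidableEq E] in
theorem mem_lines {W Z : Subgroup E} : Z ∈ lines p W ↔ Z ≤ W ∧ Nat.card Z = p :=
  Set.Finite.mem_toFinset _

theorem pairwiseDisjoint_lines (hp : p.Prime) (W : Subgroup E) :
    (lines p W : Set (Subgroup E)).PairwiseDisjoint fun Z => Z.elems.erase 1 := by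
  intro Z₁ h₁ Z₂ h₂ hne
  refine Finset.disjoint_left.2 fun x hx₁ hx₂ => hne ?_
  simp only [Finset.mem_erase, Subgroup.mem_elems] at hx₁ hx₂
  rw [← Subgroup.zpowers_eq_of_card_eq_prime hp (mem_lines.1 h₁).2 hx₁.2 hx₁.1,
    Subgroup.zpowers_eq_of_card_eq_prime hp (mem_lines.1 h₂).2 hx₂.2 hx₂.1]

theorem erase_one_eq_biUnion_lines (hp : p.Prime) (hE : ∀ x : E, x ^ p = 1) (W : Subgroup E) :
    W.elems.erase 1 = (lines p W).biUnion fun Z => Z.elems.erase 1 := by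
  have : Fact p.Prime := ⟨hp⟩
  ext x
  simp only [Finset.mem_biUnion, Finset.mem_erase, Subgroup.mem_elems, mem_lines]
  constructor
  · rintro ⟨hx, hxW⟩
    refine ⟨_, ⟨Subgroup.zpowers_le.2 hxW, ?_⟩, hx, Subgroup.mem_zpowers x⟩
    rw [Nat.card_zpowers, orderOf_eq_prime (hE x) hx]
  · rintro ⟨Z, ⟨hZW, -⟩, hx, hxZ⟩
    exact ⟨hx, hZW hxZ⟩

theorem card_lines (hp : p.Prime) (hE : ∀ x : E, x ^ p = 1) {W : Subgroup E}
    (hW : Nat.card W = p ^ 2) : (lines p W).card = p + 1 := by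
  have key := congrArg Finset.card (erase_one_eq_biUnion_lines hp hE W)
  rw [Finset.card_biUnion (pairwiseDisjoint_lines hp W),
    Finset.sum_congr rfl fun Z hZ => by
      rw [Finset.card_erase_of_mem (Subgroup.mem_elems.2 Z.one_mem), Z.card_elems,
        (mem_lines.1 hZ).2],
    Finset.card_erase_of_mem (Subgroup.mem_elems.2 W.one_mem), W.card_elems, hW,
    Finset.sum_const, smul_eq_mul] at key
  refine Nat.eq_of_mul_eq_mul_right (Nat.sub_pos_of_lt hp.one_lt) ?_
  rw [← key, ← Nat.sq_sub_sq, one_pow]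

theorem pow_mul_actionNorm_eq_prod_lines {M : Type*} [CommMonoid M] [MulDistribMulAction E M]
    (hp : p.Prime) (hE : ∀ x : E, x ^ p = 1) {W : Subgroup E} (hW : Nat.card W = p ^ 2) (m : M) :
    m ^ p * actionNorm W m = ∏ Z ∈ lines p W, actionNorm Z m := by
  simp only [actionNorm_eq_mul_prod_erase_one, Finset.prod_mul_distrib, Finset.prod_const,
    card_lines hp hE hW, ← Finset.prod_biUnion (pairwiseDisjoint_lines hp W),
    ← erase_one_eq_biUnion_lines hp hE W, pow_succ, mul_assoc]

end Lines

/-- `C_Q(V)` as a subgroup of `Q`. -/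
def fixedSubgroup {E : Type*} [Group E] (V : Subgroup E) (Q : Type*) [Group Q]
    [MulDistribMulAction E Q] : Subgroup Q where
  carrier := fixedSet V.toSubmonoid
  one_mem' _ _ := smul_one _
  mul_mem' ha hb g hg := by rw [smul_mul', ha g hg, hb g hg]
  inv_mem' ha g hg := by rw [smul_inv', ha g hg]

section FixedSubgroup

variable {E Q : Type*} [Group E] [Group Q] [MulDistribMulAction E Q]

theorem mem_fixedSubgroup {V : Subgroup E} {q : Q} :
    q ∈ fixedSubgroup V Q ↔ ∀ g ∈ V, g • q = q :=
  Iff.rfl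

theorem mem_fixedSubgroup_iff_le_stabilizer {V : Subgroup E} {q : Q} :
    q ∈ fixedSubgroup V Q ↔ V ≤ MulAction.stabilizer E q :=
  Iff.rfl

theorem fixedSubgroup_antitone : Antitone fun V : Subgroup E => fixedSubgroup V Q :=
  fun _ _ hUV _ hq g hg => hq g (hUV hg)

theorem fixedSubgroup_sup (U V : Subgroup E) :
    fixedSubgroup (U ⊔ V) Q = fixedSubgroup U Q ⊓ fixedSubgroup V Q := by
  ext q
  simp only [Subgroup.mem_inf, mem_fixedSubgroup_iff_le_stabilizer, sup_le_iff]

theorem fixedSubgroup_bot : fixedSubgroup (⊥ : Subgroup E) Q = ⊤ := by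
  ext q
  simp [mem_fixedSubgroup]

theorem fixedSubgroup_ne_top [FaithfulSMul E Q] {V : Subgroup E} (hV : V ≠ ⊥) :
    fixedSubgroup V Q ≠ ⊤ := by
  obtain ⟨g, hgV, hg⟩ := V.bot_or_exists_ne_one.resolve_left hV
  intro htop
  exact hg (eq_of_smul_eq_smul fun q : Q => by
    rw [one_smul]; exact (htop ▸ Subgroup.mem_top q : q ∈ fixedSubgroup V Q) g hgV)

theorem fixedSubgroup_lt_of_mem {H V : Subgroup E} (hHV : H ≤ V) {q : Q}
    (hqH : q ∈ fixedSubgroup H Q) (hqV : q ∉ fixedSubgroup V Q) :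
    fixedSubgroup V Q < fixedSubgroup H Q :=
  SetLike.lt_iff_le_and_exists.2 ⟨fixedSubgroup_antitone hHV, q, hqH, hqV⟩

end FixedSubgroup

section Abelian

variable {E M : Type*} [CommGroup E] [Finite E] [CommGroup M] [MulDistribMulAction E M]

theorem actionNorm_mem_fixedSubgroup_sup {B : Subgroup E} {m : M} (hm : m ∈ fixedSubgroup B M)
    (Z : Subgroup E) : actionNorm Z m ∈ fixedSubgroup (B ⊔ Z) M := by
  rw [fixedSubgroup_sup]
  exact ⟨fun b hb => smul_actionNorm_of_commute (fun f _ => Commute.all b f) (hm b hb),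
    fun f hf => smul_actionNorm_of_mem hf m⟩

variable {p : ℕ} (hp : p.Prime) (hE : ∀ x : E, x ^ p = 1) (hM : (Nat.card M).Coprime p)
include hp hE hM

/-- The norms of `m ∈ C_M(B)` over the `p + 1` lines of a complement `W` of `B` in `V` and over `W`
itself are `V`-fixed, and `m ^ p` is their quotient. -/
theorem fixedSubgroup_le_of_codim_two {B V : Subgroup E} (hBV : B ≤ V)
    (hcard : Nat.card B * p ^ 2 = Nat.card V)
    (hV : ∀ H ≤ V, Nat.card H * p = Nat.card V → B ≤ H → fixedSubgroup H M ≤ fixedSubgroup V M) :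
    fixedSubgroup B M ≤ fixedSubgroup V M := by
  classical
  obtain ⟨W, hWV, hBW, hBWV⟩ := exists_inf_eq_bot_sup_eq hp hE hBV
  have hBpos : 0 < Nat.card B := Nat.card_pos
  have hW : Nat.card W = p ^ 2 := by
    rw [← hBWV, Subgroup.card_sup_of_inf_eq_bot hBW] at hcard
    exact (Nat.eq_of_mul_eq_mul_left hBpos hcard).symm
  intro m hm
  have hline : ∀ Z ∈ lines p W, actionNorm Z m ∈ fixedSubgroup V M := by
    intro Z hZ
    obtain ⟨hZW, hZp⟩ := mem_lines.1 hZ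
    refine hV _ (sup_le hBV (hZW.trans hWV)) ?_ le_sup_left
      (actionNorm_mem_fixedSubgroup_sup hm Z)
    rw [Subgroup.card_sup_of_inf_eq_bot (le_bot_iff.1 (hBW ▸ inf_le_inf_left B hZW)), hZp, ← hcard,
      pow_two, mul_assoc]
  have hnorm : actionNorm W m ∈ fixedSubgroup V M := hBWV ▸ actionNorm_mem_fixedSubgroup_sup hm W
  refine Subgroup.mem_of_pow_mem_of_coprime hM ?_
  rw [← mul_div_cancel_right (m ^ p) (actionNorm W m), pow_mul_actionNorm_eq_prod_lines hp hE hW]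
  exact div_mem (Subgroup.prod_mem _ hline) hnorm

theorem fixedSubgroup_eq_top_of_forall_hyperplane (k : ℕ) {V : Subgroup E}
    (hVk : Nat.card V = p ^ k)
    (hV : ∀ H ≤ V, Nat.card H * p = Nat.card V → fixedSubgroup H M ≤ fixedSubgroup V M) :
    fixedSubgroup V M = ⊤ := by
  induction k generalizing V with
  | zero => rw [Subgroup.card_eq_one.1 hVk, fixedSubgroup_bot]
  | succ k ih =>
    obtain ⟨g, hgV, hg⟩ :=
      V.bot_or_exists_ne_one.resolve_left (Subgroup.ne_bot_of_card_eq_pow_succ hp hVk)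
    have : Fact p.Prime := ⟨hp⟩
    obtain ⟨U, hUV, hgU, hgUV⟩ := exists_inf_eq_bot_sup_eq hp hE (Subgroup.zpowers_le.2 hgV)
    have hUp : Nat.card U * p = Nat.card V := by
      rw [← hgUV, Subgroup.card_sup_of_inf_eq_bot hgU, Nat.card_zpowers, orderOf_eq_prime (hE g) hg,
        mul_comm]
    have hUk : Nat.card U = p ^ k :=
      Nat.eq_of_mul_eq_mul_right hp.pos (by rw [hUp, hVk, pow_succ])
    have hU : fixedSubgroup U M = ⊤ := ih hUk fun H hHU hHp =>
      (fixedSubgroup_le_of_codim_two hp hE hM (hHU.trans hUV) (by rw [← hUp, ← hHp]; ring)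
        fun H' hH'V hH'p _ => hV H' hH'V hH'p).trans (fixedSubgroup_antitone hUV)
    exact top_le_iff.1 (hU ▸ hV U hUV hUp)

theorem exists_hyperplane_fixedSubgroup_lt (k : ℕ) {V : Subgroup E} (hVk : Nat.card V = p ^ k)
    (hVM : fixedSubgroup V M ≠ ⊤) :
    ∃ H ≤ V, Nat.card H * p = Nat.card V ∧ fixedSubgroup V M < fixedSubgroup H M := by
  by_contra! h
  exact hVM (fixedSubgroup_eq_top_of_forall_hyperplane hp hE hM k hVk fun H hHV hHp =>
    (eq_of_le_of_not_lt (fixedSubgroup_antitone hHV) (h H hHV hHp)).ge)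

end Abelian

section Center

open Subgroup

variable {E Q : Type*} [Group E] [Group Q] [MulDistribMulAction E Q]

theorem smul_mem_center (g : E) {z : Q} (hz : z ∈ center Q) : g • z ∈ center Q := by
  refine mem_center_iff.2 fun q => ?_
  rw [← smul_inv_smul g q, ← smul_mul', ← smul_mul', mem_center_iff.1 hz]

instance : MulDistribMulAction E (center Q) where
  smul g z := ⟨g • (z : Q), smul_mem_center g z.2⟩
  one_smul z := Subtype.ext (one_smul E (z : Q))
  mul_smul g h z := Subtype.ext (mul_smul g h (z : Q))
  smul_mul g z w := Subtype.ext (smul_mul' g (z : Q) w)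
  smul_one g := Subtype.ext (smul_one g)

instance : MulDistribMulAction E (Q ⧸ center Q) where
  smul g := QuotientGroup.map _ _ (MulDistribMulAction.toMonoidHom Q g)
    fun _ => smul_mem_center g
  one_smul x := QuotientGroup.induction_on x fun q => congrArg QuotientGroup.mk (one_smul E q)
  mul_smul g h x := QuotientGroup.induction_on x fun q => congrArg QuotientGroup.mk (mul_smul g h q)
  smul_mul g x y := QuotientGroup.induction_on x fun q => QuotientGroup.induction_on y fun r =>
    congrArg QuotientGroup.mk (smul_mul' g q r)
  smul_one _ := map_one _

theorem coe_smul_center (g : E) (z : center Q) : ((g • z : center Q) : Q) = g • (z : Q) := rfl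

theorem smul_mk_center (g : E) (q : Q) :
    g • (q : Q ⧸ center Q) = ((g • q : Q) : Q ⧸ center Q) := rfl

theorem coe_mem_fixedSubgroup_iff {V : Subgroup E} {z : center Q} :
    (z : Q) ∈ fixedSubgroup V Q ↔ z ∈ fixedSubgroup V (center Q) := by
  simp only [mem_fixedSubgroup, Subtype.ext_iff, coe_smul_center]

theorem mk_mem_fixedSubgroup {V : Subgroup E} {q : Q} (hq : q ∈ fixedSubgroup V Q) :
    (q : Q ⧸ center Q) ∈ fixedSubgroup V (Q ⧸ center Q) :=
  fun g hg => by rw [smul_mk_center, hq g hg]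

/-- `c = q⁻¹ (g • q)` is central and `g`-fixed, so `g ^ k • q = q * c ^ k`, whence `c ^ n = 1`. -/
theorem smul_eq_self_of_smul_mk_eq {n : ℕ} (hQ : (Nat.card Q).Coprime n) {g : E} (hg : g ^ n = 1)
    (hgZ : ∀ z ∈ center Q, g • z = z) {q : Q} (hgq : g • (q : Q ⧸ center Q) = q) : g • q = q := by
  set c := q⁻¹ * g • q
  have hc : c ∈ center Q := QuotientGroup.eq.1 (hgq.symm.trans (smul_mk_center g q))
  have hgq' : g • q = q * c := (mul_inv_cancel_left q _).symm
  have hpow : ∀ k : ℕ, g ^ k • q = q * c ^ k := by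
    intro k
    induction k with
    | zero => simp
    | succ k ih =>
      rw [pow_succ', mul_smul, ih, smul_mul', smul_pow', hgZ c hc, hgq', mul_assoc, ← pow_succ']
  have hcn : c ^ n = 1 := mul_eq_left.1 (by rw [← hpow, hg, one_smul])
  rw [hgq', hQ.pow_left_bijective.1 (hcn.trans (one_pow n).symm), mul_one]

theorem mem_fixedSubgroup_of_mk_mem {n : ℕ} (hQ : (Nat.card Q).Coprime n) {V : Subgroup E}
    (hVn : ∀ g ∈ V, g ^ n = 1) (hVZ : fixedSubgroup V (center Q) = ⊤) {q : Q}
    (hq : (q : Q ⧸ center Q) ∈ fixedSubgroup V (Q ⧸ center Q)) : q ∈ fixedSubgroup V Q :=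
  fun g hg => smul_eq_self_of_smul_mk_eq hQ (hVn g hg)
    (fun z hz => (coe_mem_fixedSubgroup_iff (z := ⟨z, hz⟩)).2 (hVZ ▸ mem_top _) g hg) (hq g hg)

end Center

section Nilpotent

open Subgroup

variable {E : Type*} [CommGroup E] [Finite E] {p : ℕ}

theorem exists_hyperplane_fixedSubgroup_lt_of_isNilpotent (hp : p.Prime) (hE : ∀ x : E, x ^ p = 1)
    (Q : Type*) [Group Q] [Group.IsNilpotent Q] [Finite Q] [MulDistribMulAction E Q]
    (hQ : (Nat.card Q).Coprime p) (k : ℕ) {V : Subgroup E} (hVk : Nat.card V = p ^ k)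
    (hVQ : fixedSubgroup V Q ≠ ⊤) :
    ∃ H ≤ V, Nat.card H * p = Nat.card V ∧ fixedSubgroup V Q < fixedSubgroup H Q := by
  refine Group.nilpotent_center_quotient_ind
    (P := fun Q _ _ => ∀ [Finite Q] [MulDistribMulAction E Q], (Nat.card Q).Coprime p →
      fixedSubgroup V Q ≠ ⊤ → ∃ H ≤ V, Nat.card H * p = Nat.card V ∧
        fixedSubgroup V Q < fixedSubgroup H Q)
    Q (fun Q _ _ _ _ _ hVQ => absurd (Subsingleton.elim _ _) hVQ)
    (fun Q _ _ ih _ _ hQ hVQ => ?_) hQ hVQ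
  have hVp : ∀ g ∈ V, g ^ p = 1 := fun g _ => hE g
  by_cases hVZ : fixedSubgroup V (center Q) = ⊤
  · have hVQZ : fixedSubgroup V (Q ⧸ center Q) ≠ ⊤ := fun h => hVQ <| eq_top_iff.2 fun q _ =>
      mem_fixedSubgroup_of_mk_mem hQ hVp hVZ (h ▸ mem_top _)
    obtain ⟨H, hHV, hHp, hlt⟩ := ih (hQ.coprime_dvd_left (card_quotient_dvd_card _)) hVQZ
    obtain ⟨x, hxH, hxV⟩ := SetLike.exists_of_lt hlt
    obtain ⟨q, rfl⟩ := QuotientGroup.mk_surjective x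
    have hHZ : fixedSubgroup H (center Q) = ⊤ := top_le_iff.1 (hVZ ▸ fixedSubgroup_antitone hHV)
    exact ⟨H, hHV, hHp, fixedSubgroup_lt_of_mem hHV
      (mem_fixedSubgroup_of_mk_mem hQ (fun g hg => hVp g (hHV hg)) hHZ hxH)
      fun hq => hxV (mk_mem_fixedSubgroup hq)⟩
  · obtain ⟨H, hHV, hHp, hlt⟩ : ∃ H ≤ V, Nat.card H * p = Nat.card V ∧
        fixedSubgroup V (center Q) < fixedSubgroup H (center Q) := by
      open IsMulCommutative in
      exact exists_hyperplane_fixedSubgroup_lt hp hE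
        (hQ.coprime_dvd_left (card_subgroup_dvd_card _)) k hVk hVZ
    obtain ⟨z, hzH, hzV⟩ := SetLike.exists_of_lt hlt
    exact ⟨H, hHV, hHp, fixedSubgroup_lt_of_mem hHV (coe_mem_fixedSubgroup_iff.2 hzH)
      fun hz => hzV (coe_mem_fixedSubgroup_iff.1 hz)⟩

end Nilpotent

section Chain

variable {E Q : Type*} [CommGroup E] [Finite E] [Group Q] [Group.IsNilpotent Q] [Finite Q]
  [MulDistribMulAction E Q] [FaithfulSMul E Q] {p : ℕ}

theorem exists_fixedSubgroup_chain (hp : p.Prime) (hE : ∀ x : E, x ^ p = 1)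
    (hQ : (Nat.card Q).Coprime p) (k : ℕ) {V : Subgroup E} (hVk : Nat.card V = p ^ k) :
    ∃ c : Fin (k + 1) → Subgroup E, c 0 = V ∧ c (Fin.last k) = ⊥ ∧ StrictAnti c ∧
      StrictMono fun i => fixedSubgroup (c i) Q := by
  induction k generalizing V with
  | zero => exact ⟨fun _ => ⊥, (Subgroup.card_eq_one.1 hVk).symm, rfl,
      Subsingleton.strictAnti (α := Fin 1) _, Subsingleton.strictMono (α := Fin 1) _⟩
  | succ k ih =>
    obtain ⟨H, hHV, hHp, hlt⟩ := exists_hyperplane_fixedSubgroup_lt_of_isNilpotent hp hE Q hQ _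
      hVk (fixedSubgroup_ne_top (Subgroup.ne_bot_of_card_eq_pow_succ hp hVk))
    obtain ⟨c, hc0, hclast, hanti, hmono⟩ :=
      ih (Nat.eq_of_mul_eq_mul_right hp.pos (by rw [hHp, hVk, pow_succ]))
    have hHV' : H < V := hHV.lt_of_ne fun h => hlt.ne (h ▸ rfl)
    refine ⟨Fin.cons V c, rfl, by rwa [← Fin.succ_last, Fin.cons_succ], ?_, ?_⟩
    · exact Fin.strictAnti_cons.2
        ⟨fun j => (hanti.antitone (Fin.zero_le j)).trans_lt (hc0 ▸ hHV'), hanti⟩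
    · show StrictMono ((fixedSubgroup · Q) ∘ Fin.cons V c)
      rw [Fin.comp_cons]
      exact Fin.strictMono_cons.2
        ⟨fun j => hlt.trans_le (hc0 ▸ hmono.monotone (Fin.zero_le j)), hmono⟩

end Chain

theorem elementary_abelian_faithful_action_chain
    (p : ℕ) (hp : p.Prime) (n : ℕ) (E Q : Type*) [CommGroup E] [Group Q] [Finite Q]
    [MulDistribMulAction E Q] [FaithfulSMul E Q]
    (hEelem : ∀ x : E, x ^ p = 1) (hEcard : Nat.card E = p ^ n)
    (hQnilp : Group.IsNilpotent Q) (hQp' : ¬ p ∣ Nat.card Q) :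
    ∃ Ech : Fin (n + 1) → Subgroup E,
      Ech 0 = ⊤ ∧ Ech (Fin.last n) = ⊥ ∧ StrictAnti Ech ∧
      StrictMono (fun i => fixedSet (Q := Q) (Ech i).toSubmonoid) := by
  have : Finite E := Nat.finite_of_card_ne_zero (hEcard ▸ (pow_pos hp.pos n).ne')
  have hQ : (Nat.card Q).Coprime p := (hp.coprime_iff_not_dvd.2 hQp').symm
  obtain ⟨c, hc0, hclast, hanti, hmono⟩ :=
    exists_fixedSubgroup_chain hp hEelem hQ n (V := ⊤) (by rw [Subgroup.card_top, hEcard])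
  exact ⟨c, hc0, hclast, hanti, SetLike.coe_strictMono.comp hmono⟩
end
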